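/- Lower bound on σ_min after a projection-and-QR step: let U^{00} ∈ ℝ^{n×r} have orthonormal columns and U*Q have orthonormal columns (Q orthogonal), and let M ∈ ℝ^{n×r} satisfy ‖M − U*Q‖_F ≤ ε < 1. If M = U⁰R⁰ is a QR decomposition with U⁰ orthonormal-columned, then ‖(I − U*U*ᵀ)U⁰‖_F ≤ ε/(1 − ε). In particular if ε ≤ 0.3 then SE_F(U⁰, U*) ≤ 1.5ε. -/
import Mathlib
open Matrix BigOperators

noncomputable def vnorm {m : ℕ} (v : Fin m → ℝ) : ℝ := Real.sqrt (∑ i, v i ^ 2)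

noncomputable def fnorm {m k : ℕ} (M : Matrix (Fin m) (Fin k) ℝ) : ℝ :=
  Real.sqrt (∑ j, ∑ i, M j i ^ 2)

noncomputable def opnorm {m k : ℕ} (M : Matrix (Fin m) (Fin k) ℝ) : ℝ :=
  sSup {c | ∃ x : Fin k → ℝ, vnorm x = 1 ∧ c = vnorm (M.mulVec x)}

noncomputable def smin {m k : ℕ} (M : Matrix (Fin m) (Fin k) ℝ) : ℝ :=
  sInf {c | ∃ x : Fin m → ℝ, vnorm x = 1 ∧ c = vnorm (M.vecMul x)}

lemma vnorm_nonneg {m : ℕ} (v : Fin m → ℝ) : 0 ≤ vnorm v := Real.sqrt_nonneg _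

lemma vnorm_sq {m : ℕ} (v : Fin m → ℝ) : vnorm v ^ 2 = ∑ i, v i ^ 2 := by
  rw [vnorm, Real.sq_sqrt]; positivity

lemma fnorm_nonneg {m k : ℕ} (M : Matrix (Fin m) (Fin k) ℝ) : 0 ≤ fnorm M := Real.sqrt_nonneg _

lemma fnorm_sq {m k : ℕ} (M : Matrix (Fin m) (Fin k) ℝ) : fnorm M ^ 2 = ∑ j, ∑ i, M j i ^ 2 := by
  rw [fnorm, Real.sq_sqrt]; positivity

lemma vnorm_sq_eq_dot {m : ℕ} (v : Fin m → ℝ) : vnorm v ^ 2 = v ⬝ᵥ v := by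
  rw [vnorm_sq, dotProduct]; simp [sq]

lemma dot_le_vnorm_mul {m : ℕ} (u v : Fin m → ℝ) : u ⬝ᵥ v ≤ vnorm u * vnorm v := by
  have h := Finset.sum_mul_sq_le_sq_mul_sq Finset.univ u v
  refine (le_abs_self _).trans ?_
  rw [← Real.sqrt_sq_eq_abs, vnorm, vnorm, ← Real.sqrt_mul (by positivity)]
  exact Real.sqrt_le_sqrt h

lemma sq_le_imp {a b : ℝ} (hb : 0 ≤ b) (h : a ^ 2 ≤ b ^ 2) : a ≤ b := by
  nlinarith

lemma vnorm_mulVec_le {m k : ℕ} (A : Matrix (Fin m) (Fin k) ℝ) (x : Fin k → ℝ) :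
    vnorm (A.mulVec x) ≤ fnorm A * vnorm x := by
  refine sq_le_imp (mul_nonneg (fnorm_nonneg _) (vnorm_nonneg _)) ?_
  rw [vnorm_sq, mul_pow, fnorm_sq, vnorm_sq, Finset.sum_mul]
  exact Finset.sum_le_sum fun i _ =>
    Finset.sum_mul_sq_le_sq_mul_sq Finset.univ (A i) x

lemma vnorm_add_le {m : ℕ} (u v : Fin m → ℝ) : vnorm (u + v) ≤ vnorm u + vnorm v := by
  refine sq_le_imp (add_nonneg (vnorm_nonneg _) (vnorm_nonneg _)) ?_
  have h1 := vnorm_sq (u + v)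
  have h2 := vnorm_sq u
  have h3 := vnorm_sq v
  have h4 := dot_le_vnorm_mul u v
  have h5 : ∑ i, (u i + v i) ^ 2 = (∑ i, u i ^ 2) + 2 * (u ⬝ᵥ v) + ∑ i, v i ^ 2 := by
    rw [dotProduct, Finset.mul_sum, ← Finset.sum_add_distrib, ← Finset.sum_add_distrib]
    exact Finset.sum_congr rfl fun i _ => by ring
  have h6 : vnorm (u + v) ^ 2 = (∑ i, (u i + v i) ^ 2) := by
    rw [vnorm_sq]; rfl
  nlinarith

lemma vnorm_sub_le {m : ℕ} (u v : Fin m → ℝ) : vnorm (u - v) ≤ vnorm u + vnorm v := by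
  have h := vnorm_add_le u (-v)
  have h2 : u + -v = u - v := by abel
  have h3 : vnorm (-v) = vnorm v := by
    unfold vnorm; congr 1; exact Finset.sum_congr rfl fun i _ => by simp [neg_pow]
  rw [h2, h3] at h
  exact h

lemma isometry_mulVec {m k : ℕ} (U : Matrix (Fin m) (Fin k) ℝ) (hU : Uᵀ * U = 1)
    (x : Fin k → ℝ) : vnorm (U.mulVec x) = vnorm x := by
  have h : vnorm (U.mulVec x) ^ 2 = vnorm x ^ 2 := by
    rw [vnorm_sq_eq_dot, vnorm_sq_eq_dot, dotProduct_mulVec, vecMul_mulVec, hU, vecMul_one]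
  nlinarith [vnorm_nonneg (U.mulVec x), vnorm_nonneg x]

lemma fnorm_sq_rows {m k : ℕ} (A : Matrix (Fin m) (Fin k) ℝ) :
    fnorm A ^ 2 = ∑ j, vnorm (A j) ^ 2 := by
  rw [fnorm_sq]
  exact Finset.sum_congr rfl fun j _ => (vnorm_sq (A j)).symm

lemma fnorm_mul_le_of_vecMul {m k l : ℕ} (A : Matrix (Fin m) (Fin k) ℝ)
    (B : Matrix (Fin k) (Fin l) ℝ) (c : ℝ) (hc : 0 ≤ c)
    (h : ∀ v : Fin k → ℝ, vnorm (v ᵥ* B) ≤ c * vnorm v) :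
    fnorm (A * B) ≤ c * fnorm A := by
  refine sq_le_imp (mul_nonneg hc (fnorm_nonneg _)) ?_
  rw [mul_pow, fnorm_sq_rows, fnorm_sq_rows, Finset.mul_sum]
  refine Finset.sum_le_sum fun j _ => ?_
  have hrow : (A * B) j = (A j) ᵥ* B := by
    ext i; simp [Matrix.mul_apply, vecMul, dotProduct]
  rw [hrow, ← mul_pow]
  exact pow_le_pow_left₀ (vnorm_nonneg _) (h (A j)) 2

lemma fnorm_transpose {m k : ℕ} (A : Matrix (Fin m) (Fin k) ℝ) : fnorm Aᵀ = fnorm A := by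
  unfold fnorm
  rw [Finset.sum_comm]
  rfl

lemma fnorm_mul_le_of_mulVec {m k l : ℕ} (A : Matrix (Fin m) (Fin k) ℝ)
    (B : Matrix (Fin k) (Fin l) ℝ) (c : ℝ) (hc : 0 ≤ c)
    (h : ∀ v : Fin k → ℝ, vnorm (A *ᵥ v) ≤ c * vnorm v) :
    fnorm (A * B) ≤ c * fnorm B := by
  rw [← fnorm_transpose (A * B), Matrix.transpose_mul, ← fnorm_transpose B]
  refine fnorm_mul_le_of_vecMul Bᵀ Aᵀ c hc fun v => ?_
  rw [Matrix.vecMul_transpose]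
  exact h v
theorem init_projection_QR_bound {n r : ℕ} (ε : ℝ) (hε : ε < 1)
    (Ustar : Matrix (Fin n) (Fin r) ℝ) (hUstar : Ustarᵀ * Ustar = 1)
    (Q : Matrix (Fin r) (Fin r) ℝ) (hQ : Qᵀ * Q = 1)
    (M U0 : Matrix (Fin n) (Fin r) ℝ) (R0 : Matrix (Fin r) (Fin r) ℝ)
    (hM : fnorm (M - Ustar * Q) ≤ ε)
    (hQR : M = U0 * R0) (hU0 : U0ᵀ * U0 = 1) (hR0 : IsUnit R0) :
    fnorm ((1 - Ustar * Ustarᵀ) * U0) ≤ ε / (1 - ε) ∧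
    (ε ≤ 0.3 → fnorm ((1 - Ustar * Ustarᵀ) * U0) ≤ 1.5 * ε) := by
  set P : Matrix (Fin n) (Fin n) ℝ := 1 - Ustar * Ustarᵀ with hP
  set E : Matrix (Fin n) (Fin r) ℝ := M - Ustar * Q with hE
  have hε0 : 0 ≤ ε := le_trans (fnorm_nonneg _) hM
  have hc : 0 < 1 - ε := by linarith
  -- orthonormality of Ustar * Q
  have hUQ : (Ustar * Q)ᵀ * (Ustar * Q) = 1 := by
    rw [Matrix.transpose_mul, Matrix.mul_assoc, ← Matrix.mul_assoc Ustarᵀ, hUstar,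
      Matrix.one_mul, hQ]
  -- lower bound on R0
  have hD : ∀ x : Fin r → ℝ, (1 - ε) * vnorm x ≤ vnorm (R0 *ᵥ x) := by
    intro x
    have h1 : vnorm x = vnorm ((Ustar * Q) *ᵥ x) := (isometry_mulVec _ hUQ x).symm
    have hME : Ustar * Q = M - E := by rw [hE]; abel
    have h2 : (Ustar * Q) *ᵥ x = M *ᵥ x - E *ᵥ x := by rw [hME, Matrix.sub_mulVec]
    have h3 : vnorm (M *ᵥ x) = vnorm (R0 *ᵥ x) := by
      rw [hQR, ← Matrix.mulVec_mulVec]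
      exact isometry_mulVec U0 hU0 _
    have h4 : vnorm (E *ᵥ x) ≤ ε * vnorm x :=
      (vnorm_mulVec_le E x).trans (mul_le_mul_of_nonneg_right hM (vnorm_nonneg x))
    have h5 := vnorm_sub_le (M *ᵥ x) (E *ᵥ x)
    rw [← h2, ← h1, h3] at h5
    linarith
  -- R0 is invertible
  have hdet : IsUnit R0.det := (Matrix.isUnit_iff_isUnit_det R0).mp hR0
  have hinv1 : R0 * R0⁻¹ = 1 := Matrix.mul_nonsing_inv R0 hdet
  -- upper bound on R0⁻¹ (mulVec)
  have hS : ∀ z : Fin r → ℝ, (1 - ε) * vnorm (R0⁻¹ *ᵥ z) ≤ vnorm z := by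
    intro z
    have h := hD (R0⁻¹ *ᵥ z)
    rwa [Matrix.mulVec_mulVec, hinv1, Matrix.one_mulVec] at h
  -- upper bound on R0⁻¹ (vecMul)
  have hT : ∀ w : Fin r → ℝ, vnorm (w ᵥ* R0⁻¹) ≤ (1 - ε)⁻¹ * vnorm w := by
    intro w
    set y := w ᵥ* R0⁻¹ with hy
    rcases eq_or_lt_of_le (vnorm_nonneg y) with h0 | h0
    · rw [← h0]
      exact mul_nonneg (inv_nonneg.mpr hc.le) (vnorm_nonneg w)
    · have key : vnorm y ^ 2 = w ⬝ᵥ (R0⁻¹ *ᵥ y) := by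
        rw [vnorm_sq_eq_dot, Matrix.dotProduct_mulVec, ← hy]
      have h1 : w ⬝ᵥ (R0⁻¹ *ᵥ y) ≤ vnorm w * vnorm (R0⁻¹ *ᵥ y) := dot_le_vnorm_mul _ _
      have h2 := hS y
      have h3 : (1 - ε) * vnorm y * vnorm y ≤ vnorm w * vnorm y := by
        nlinarith [vnorm_nonneg w, vnorm_nonneg (R0⁻¹ *ᵥ y)]
      have h4 := le_of_mul_le_mul_right h3 h0
      rw [inv_mul_eq_div, le_div_iff₀ hc]
      linarith
  -- P is a contraction
  have hPsymm : Pᵀ = P := by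
    rw [hP, Matrix.transpose_sub, Matrix.transpose_one, Matrix.transpose_mul,
      Matrix.transpose_transpose]
  have hAA : Ustar * Ustarᵀ * (Ustar * Ustarᵀ) = Ustar * Ustarᵀ := by
    rw [Matrix.mul_assoc, ← Matrix.mul_assoc Ustarᵀ, hUstar, Matrix.one_mul]
  have hPP : P * P = P := by
    rw [hP, Matrix.sub_mul, Matrix.one_mul, Matrix.mul_sub, Matrix.mul_one, hAA]
    abel
  have hPcon : ∀ v : Fin n → ℝ, vnorm (P *ᵥ v) ≤ 1 * vnorm v := by
    intro v
    rw [one_mul]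
    refine sq_le_imp (vnorm_nonneg v) ?_
    have e1 : vnorm (P *ᵥ v) ^ 2 = (v ᵥ* (Pᵀ * P)) ⬝ᵥ v := by
      rw [vnorm_sq_eq_dot, Matrix.dotProduct_mulVec, Matrix.vecMul_mulVec]
    rw [e1, hPsymm, hPP, hP, Matrix.vecMul_sub, Matrix.vecMul_one, sub_dotProduct,
      vnorm_sq_eq_dot]
    have e2 : (v ᵥ* (Ustar * Ustarᵀ)) ⬝ᵥ v = (v ᵥ* Ustar) ⬝ᵥ (v ᵥ* Ustar) := by
      rw [← Matrix.vecMul_vecMul, Matrix.vecMul_transpose, dotProduct_comm,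
        Matrix.dotProduct_mulVec]
    have e3 : 0 ≤ (v ᵥ* Ustar) ⬝ᵥ (v ᵥ* Ustar) :=
      Finset.sum_nonneg fun i _ => mul_self_nonneg _
    rw [e2]
    linarith
  -- matrix identities
  have hz : P * (Ustar * Q) = 0 := by
    rw [hP, Matrix.sub_mul, Matrix.one_mul, Matrix.mul_assoc,
      ← Matrix.mul_assoc Ustarᵀ, hUstar, Matrix.one_mul, sub_self]
  have hPE : P * E = P * M := by
    rw [hE, Matrix.mul_sub, hz, sub_zero]
  have hPU0 : P * U0 = (P * E) * R0⁻¹ := by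
    have h1 : P * U0 = P * U0 * (R0 * R0⁻¹) := by rw [hinv1, Matrix.mul_one]
    rw [h1, ← Matrix.mul_assoc, Matrix.mul_assoc P U0 R0, ← hQR, ← hPE]
  -- combine
  have hPEb : fnorm (P * E) ≤ ε := by
    have := fnorm_mul_le_of_mulVec P E 1 zero_le_one hPcon
    rw [one_mul] at this
    exact this.trans hM
  have hfinal : fnorm (P * U0) ≤ ε / (1 - ε) := by
    rw [hPU0]
    have h1 := fnorm_mul_le_of_vecMul (P * E) R0⁻¹ ((1 - ε)⁻¹) (inv_nonneg.mpr hc.le) hT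
    have h2 : (1 - ε)⁻¹ * fnorm (P * E) ≤ (1 - ε)⁻¹ * ε :=
      mul_le_mul_of_nonneg_left hPEb (inv_nonneg.mpr hc.le)
    rw [div_eq_inv_mul]
    exact h1.trans h2
  refine ⟨hfinal, fun h3 => hfinal.trans ?_⟩
  rw [div_le_iff₀ hc]
  nlinarith
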